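/- Fix λ ∈ R, p=(1,0,0,0), and for θ ∈ [0,2π] let γ_θ be the geodesic of curvature λ with γ_θ(0)=p and γ_θ'(0)=cos(θ)E1(p)+sin(θ)E2(p). Then all geodesics γ_θ meet at the common point γ_θ(π/√(1+λ²)) = −cos(λπ/√(1+λ²))·p + sin(λπ/√(1+λ²))·V(p), independent of θ. -/

import Mathlib

open Real
open scoped RealInnerProductSpace

def qi : Quaternion ℝ := ⟨0, 1, 0, 0⟩

/-!
Left multiplication by `i` is a complex structure on `ℍ`, so with `cis t = cos t + sin t · i`
the equation `γ'' + γ + 2λ i γ' = 0` factors as `(D - μ₊ i)(D - μ₋ i) γ = 0`, where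
`μ± = -λ ± ω` and `ω = √(1 + λ²)`. Hence every solution is
`cis (μ₊ s) a + cis (μ₋ s) b`. Since `μ₊ - μ₋ = 2ω`, both exponentials agree at `s = π / ω`,
so that `γ (π / ω) = cis (μ₋ π / ω) γ(0)`.
-/

section Cis

variable {A : Type*} [NormedRing A] [NormedAlgebra ℝ A] {J : A}

noncomputable def cis (J : A) (t : ℝ) : A := cos t • 1 + sin t • J

@[simp]
lemma cis_zero (J : A) : cis J 0 = 1 := by simp [cis]

lemma commute_cis (J : A) (t : ℝ) : Commute J (cis J t) := by
  simp only [cis]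
  exact ((Commute.one_right J).smul_right _).add_right ((Commute.refl J).smul_right _)

lemma cis_add_two_pi (J : A) (t : ℝ) : cis J (t + 2 * π) = cis J t := by
  simp [cis]

lemma cis_neg_pi_add (J : A) (t : ℝ) : cis J (-(π + t)) = (-cos t) • 1 + sin t • J := by
  simp [cis, cos_add, sin_add]

lemma cis_add (hJ : J * J = -1) (s t : ℝ) : cis J (s + t) = cis J s * cis J t := by
  simp only [cis, add_mul, mul_add, smul_mul_assoc, mul_smul_comm, one_mul,
    mul_one, hJ, cos_add, sin_add]
  module

lemma cis_neg_mul_eq_iff (hJ : J * J = -1) (t : ℝ) (x y : A) :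
    cis J (-t) * x = y ↔ x = cis J t * y := by
  have hinv : cis J t * cis J (-t) = 1 := by rw [← cis_add hJ, add_neg_cancel, cis_zero]
  have hinv' : cis J (-t) * cis J t = 1 := by rw [← cis_add hJ, neg_add_cancel, cis_zero]
  constructor
  · rintro rfl; rw [← mul_assoc, hinv, one_mul]
  · rintro rfl; rw [← mul_assoc, hinv', one_mul]

lemma hasDerivAt_cis_const_mul (hJ : J * J = -1) (μ s : ℝ) :
    HasDerivAt (fun s => cis J (μ * s)) (μ • (J * cis J (μ * s))) s := by
  have hlin : HasDerivAt (fun s : ℝ => μ * s) μ s := by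
    simpa using (hasDerivAt_id s).const_mul μ
  have hcos := (hasDerivAt_cos (μ * s)).comp s hlin
  have hsin := (hasDerivAt_sin (μ * s)).comp s hlin
  refine ((hcos.smul_const (1 : A)).add (hsin.smul_const J)).congr_deriv ?_
  simp only [cis, mul_add, mul_smul_comm, mul_one, hJ]
  module

lemma HasDerivAt.cis_mul (hJ : J * J = -1) {u : ℝ → A} {u' : A} {s : ℝ} (μ : ℝ)
    (hu : HasDerivAt u u' s) :
    HasDerivAt (fun s => cis J (μ * s) * u s) (cis J (μ * s) * (u' + μ • (J * u s))) s := by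
  refine ((hasDerivAt_cis_const_mul hJ μ s).mul hu).congr_deriv ?_
  rw [smul_mul_assoc, mul_assoc, (commute_cis J (μ * s)).left_comm, mul_add, mul_smul_comm,
    add_comm]

lemma eq_cis_mul_of_hasDerivAt (hJ : J * J = -1) {u : ℝ → A} {μ : ℝ}
    (hu : ∀ s, HasDerivAt u (μ • (J * u s)) s) (s : ℝ) : u s = cis J (μ * s) * u 0 := by
  have hw : ∀ s, HasDerivAt (fun s => cis J (-μ * s) * u s) 0 s := fun s =>
    ((hu s).cis_mul hJ (-μ)).congr_deriv (by rw [neg_smul, add_neg_cancel, mul_zero])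
  have hconst := is_const_of_deriv_eq_zero (fun x => (hw x).differentiableAt)
    (fun x => (hw x).deriv) s 0
  rwa [mul_zero, cis_zero, one_mul, neg_mul, cis_neg_mul_eq_iff hJ] at hconst

/-- `cis (μ s) * c` integrates to zero over a full period. -/
lemma apply_two_pi_div_eq_of_hasDerivAt_cis_mul (hJ : J * J = -1) {w : ℝ → A} {μ : ℝ}
    (hμ : μ ≠ 0) (c : A) (hw : ∀ s, HasDerivAt w (cis J (μ * s) * c) s) :
    w (2 * π / μ) = w 0 := by
  let F : ℝ → A := fun s => w s + (μ⁻¹ • (J * cis J (μ * s))) * c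
  have hF : ∀ s, HasDerivAt F 0 s := fun s => by
    have hFc := (((hasDerivAt_cis_const_mul hJ μ s).const_mul J).const_smul μ⁻¹).mul_const c
    refine ((hw s).add hFc).congr_deriv ?_
    rw [mul_smul_comm, ← mul_assoc, hJ, smul_smul, inv_mul_cancel₀ hμ, one_smul, neg_one_mul,
      neg_mul, add_neg_cancel]
  have hconst := is_const_of_deriv_eq_zero (fun x => (hF x).differentiableAt)
    (fun x => (hF x).deriv) (2 * π / μ) 0
  have hperiod : μ * (2 * π / μ) = 0 + 2 * π := by field_simp; ring
  simpa only [F, hperiod, cis_add_two_pi, mul_zero, add_left_inj] using hconst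

theorem apply_pi_div_sqrt_eq_cis_mul (hJ : J * J = -1) {lam : ℝ} {γ γ' γ'' : ℝ → A}
    (hd1 : ∀ s, HasDerivAt γ (γ' s) s) (hd2 : ∀ s, HasDerivAt γ' (γ'' s) s)
    (heq : ∀ s, γ'' s + γ s + (2 * lam) • (J * γ' s) = 0) :
    γ (π / √(1 + lam ^ 2)) = cis J (-(π + lam * π / √(1 + lam ^ 2))) * γ 0 := by
  set ω := √(1 + lam ^ 2)
  have hω2 : ω ^ 2 = 1 + lam ^ 2 := sq_sqrt (by positivity)
  have hω : ω ≠ 0 := (sqrt_pos.mpr (by positivity)).ne'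
  -- the roots of `μ² + 2λμ - 1`, so that `u := γ' - μ₋ J γ` solves `u' = μ₊ J u`
  set μp := ω - lam
  set μm := -ω - lam
  set u : ℝ → A := fun s => γ' s - μm • (J * γ s)
  have hu : ∀ s, HasDerivAt u (μp • (J * u s)) s := fun s => by
    refine ((hd2 s).sub (((hd1 s).const_mul J).const_smul μm)).congr_deriv ?_
    rw [show γ'' s = -γ s - (2 * lam) • (J * γ' s) by rw [← sub_eq_zero, ← heq s]; abel]
    simp only [u, mul_sub, mul_smul_comm, ← mul_assoc, hJ, neg_one_mul, smul_neg]
    match_scalars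
    · simp only [μp, μm]; linear_combination hω2
    · simp only [μp, μm]; ring
  have hw : ∀ s, HasDerivAt (fun s => cis J (-μm * s) * γ s) (cis J (2 * ω * s) * u 0) s :=
    fun s => ((hd1 s).cis_mul hJ (-μm)).congr_deriv <| by
      rw [neg_smul, ← sub_eq_add_neg]
      change cis J (-μm * s) * u s = _
      rw [eq_cis_mul_of_hasDerivAt hJ hu s, ← mul_assoc, ← cis_add hJ]
      congr 2
      simp only [μp, μm]
      ring
  have hperiod := apply_two_pi_div_eq_of_hasDerivAt_cis_mul hJ (by positivity) (u 0) hw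
  rw [mul_zero, cis_zero, one_mul, mul_div_mul_left _ _ two_ne_zero, neg_mul,
    cis_neg_mul_eq_iff hJ] at hperiod
  rw [hperiod]
  congr 2
  field_simp
  ring

end Cis

lemma qi_mul_qi : qi * qi = -1 := by
  ext <;>
    simp only [Quaternion.re_mul, Quaternion.imI_mul, Quaternion.imJ_mul, Quaternion.imK_mul,
      Quaternion.re_neg, Quaternion.imI_neg, Quaternion.imJ_neg, Quaternion.imK_neg,
      Quaternion.re_one, Quaternion.imI_one, Quaternion.imJ_one, Quaternion.imK_one] <;>
    simp [qi]

theorem geodesics_meet_at_pole_general (lam : ℝ) (γ γ' γ'' : ℝ → Quaternion ℝ)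
    (hγ0 : γ 0 = 1)
    (hd1 : ∀ s, HasDerivAt γ (γ' s) s) (hd2 : ∀ s, HasDerivAt γ' (γ'' s) s)
    (heq : ∀ s, γ'' s + γ s + (2 * lam) • (qi * γ' s) = 0) :
    γ (π / Real.sqrt (1 + lam ^ 2)) =
      (-Real.cos (lam * π / Real.sqrt (1 + lam ^ 2))) • (1 : Quaternion ℝ)
      + Real.sin (lam * π / Real.sqrt (1 + lam ^ 2)) • qi := by
  rw [apply_pi_div_sqrt_eq_cis_mul qi_mul_qi hd1 hd2 heq, hγ0, mul_one, cis_neg_pi_add]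

/-- All the geodesics `γ_θ` of curvature `λ` leaving from `p = (1,0,0,0)` with
initial velocity `cos(θ)E1(p) + sin(θ)E2(p) = (0,0,cos θ,sin θ)` meet again at
the common point
`γ_θ(π/√(1+λ²)) = −cos(λπ/√(1+λ²))·p + sin(λπ/√(1+λ²))·V(p)`,
independent of `θ`. -/
theorem geodesics_meet_at_pole (lam θ : ℝ) (γ γ' γ'' : ℝ → Quaternion ℝ)
    (hγ0 : γ 0 = 1)
    (hγ'0 : γ' 0 = ⟨0, 0, Real.cos θ, Real.sin θ⟩)
    (hd1 : ∀ s, HasDerivAt γ (γ' s) s) (hd2 : ∀ s, HasDerivAt γ' (γ'' s) s)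
    (heq : ∀ s, γ'' s + γ s + (2 * lam) • (qi * γ' s) = 0) :
    γ (π / Real.sqrt (1 + lam ^ 2)) =
      (-Real.cos (lam * π / Real.sqrt (1 + lam ^ 2))) • (1 : Quaternion ℝ)
      + Real.sin (lam * π / Real.sqrt (1 + lam ^ 2)) • qi :=
  geodesics_meet_at_pole_general lam γ γ' γ'' hγ0 hd1 hd2 heq
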